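/- Let (G = (A, B; E), c, L) be a capacitated SMP instance and S a subgraph of G with d_S(v) ≤ c(v) for every vertex v. Let E_b be the set of blocking edges of S, let E_b^A = {ab ∈ E_b : d_S(a) = c(a)} and E_b^B = {ab ∈ E_b : d_S(b) = c(b)}. For a ∈ A and F ⊆ E_b, let f_a(F) be the minimum number of swaps within ℓ(a) after which every b with ab ∈ F appears in ℓ(a) below every S-neighbor of a; define g_b(F) for b ∈ B analogously on ℓ(b). Let h(F) = Σ_{a∈A} f_a(F) + Σ_{b∈B} g_b(E_b ∖ F). Then: (i) there exists a finite sequence of swaps after which S is stable if and only if E_b = E_b^A ∪ E_b^B; and (ii) in that case, the minimum length of such a sequence equals min{ h(F) : E_b ∖ E_b^B ⊆ F ⊆ E_b^A }. -/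

import Mathlib

/-- Preference lists: for each vertex on side `α` a list of neighbors in `β`,
and vice versa (most preferred first). -/
structure Prefs (α β : Type*) where
  fA : α → List β
  fB : β → List α

/-- `l'` is obtained from `l` by one adjacent transposition (swap). -/
def AdjSwap {γ : Type*} (l l' : List γ) : Prop :=
  ∃ (p s : List γ) (x y : γ), l = p ++ x :: y :: s ∧ l' = p ++ y :: x :: s

/-- One swap applied to a set of preference lists: exactly one list changes,
by one adjacent transposition. -/
def SwapStep {α β : Type*} (L L' : Prefs α β) : Prop :=
  (∃ a, AdjSwap (L.fA a) (L'.fA a) ∧ (∀ a', a' ≠ a → L'.fA a' = L.fA a') ∧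
      (∀ b, L'.fB b = L.fB b)) ∨
  (∃ b, AdjSwap (L.fB b) (L'.fB b) ∧ (∀ b', b' ≠ b → L'.fB b' = L.fB b') ∧
      (∀ a, L'.fA a = L.fA a))

/-- `SwapSeq k L L'` : `L'` is obtained from `L` by a sequence of `k` swaps. -/
def SwapSeq {α β : Type*} : ℕ → Prefs α β → Prefs α β → Prop
  | 0, L, L' => L' = L
  | k + 1, L, L' => ∃ L'', SwapStep L L'' ∧ SwapSeq k L'' L'

/-- The preference lists are valid for the bipartite graph with edge set `E`:
each list is duplicate-free and consists exactly of the neighbors. -/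
def ValidPrefs {α β : Type*} (E : Finset (α × β)) (L : Prefs α β) : Prop :=
  (∀ a, (L.fA a).Nodup) ∧ (∀ b, (L.fB b).Nodup) ∧
  (∀ a b, b ∈ L.fA a ↔ (a, b) ∈ E) ∧ (∀ a b, a ∈ L.fB b ↔ (a, b) ∈ E)

/-- In the list `l`, `x` is preferred to `y` (occurs strictly earlier). -/
def PrefersIn {γ : Type*} [DecidableEq γ] (l : List γ) (x y : γ) : Prop :=
  x ∈ l ∧ l.idxOf x < l.idxOf y

/-- `M` is a matching of the bipartite graph with edge set `E`. -/
def IsMatching {α β : Type*} (E M : Finset (α × β)) : Prop :=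
  M ⊆ E ∧ ∀ e ∈ M, ∀ e' ∈ M, (e.1 = e'.1 ∨ e.2 = e'.2) → e = e'

/-- `e` is a blocking edge of the matching `M` w.r.t. preference lists `L`. -/
def Blocking {α β : Type*} [DecidableEq α] [DecidableEq β]
    (E : Finset (α × β)) (L : Prefs α β) (M : Finset (α × β)) (e : α × β) : Prop :=
  e ∈ E ∧ e ∉ M ∧
  ((∀ b, (e.1, b) ∉ M) ∨ ∃ b, (e.1, b) ∈ M ∧ PrefersIn (L.fA e.1) e.2 b) ∧
  ((∀ a, (a, e.2) ∉ M) ∨ ∃ a, (a, e.2) ∈ M ∧ PrefersIn (L.fB e.2) e.1 a)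

/-- `M` is a stable matching w.r.t. preference lists `L`. -/
def StableM {α β : Type*} [DecidableEq α] [DecidableEq β]
    (E : Finset (α × β)) (L : Prefs α β) (M : Finset (α × β)) : Prop :=
  ∀ e, ¬ Blocking E L M e

/-- `SwapSeqL k l l'` : `l'` is obtained from `l` by a sequence of `k`
adjacent transpositions. -/
def SwapSeqL {γ : Type*} : ℕ → List γ → List γ → Prop
  | 0, l, l' => l' = l
  | k + 1, l, l' => ∃ l'', AdjSwap l l'' ∧ SwapSeqL k l'' l'

/-- Degree of `a : α` in the subgraph `S`. -/
def degA {α β : Type*} [DecidableEq α] (S : Finset (α × β)) (a : α) : ℕ :=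
  (S.filter (fun e => e.1 = a)).card

/-- Degree of `b : β` in the subgraph `S`. -/
def degB {α β : Type*} [DecidableEq β] (S : Finset (α × β)) (b : β) : ℕ :=
  (S.filter (fun e => e.2 = b)).card

/-- `e` is a blocking edge of the subgraph `S` in the capacitated SMP instance
`(E, cA, cB, L)`. -/
def CapBlocking {α β : Type*} [DecidableEq α] [DecidableEq β]
    (E : Finset (α × β)) (cA : α → ℕ) (cB : β → ℕ) (L : Prefs α β)
    (S : Finset (α × β)) (e : α × β) : Prop :=
  e ∈ E ∧ e ∉ S ∧
  (degA S e.1 < cA e.1 ∨ ∃ b', (e.1, b') ∈ S ∧ PrefersIn (L.fA e.1) e.2 b') ∧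
  (degB S e.2 < cB e.2 ∨ ∃ a', (a', e.2) ∈ S ∧ PrefersIn (L.fB e.2) e.1 a')

/-- `S` is stable in the capacitated instance `(E, cA, cB, L)`. -/
def CapStable {α β : Type*} [DecidableEq α] [DecidableEq β]
    (E : Finset (α × β)) (cA : α → ℕ) (cB : β → ℕ) (L : Prefs α β)
    (S : Finset (α × β)) : Prop :=
  ∀ e, ¬ CapBlocking E cA cB L S e

/-- `fCost L S a F` : the minimum number of swaps within the list `ℓ(a)` after
which, for every `b` with `(a, b) ∈ F`, the vertex `b` appears below every
`S`-neighbor of `a`. -/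
noncomputable def fCost {α β : Type*} [DecidableEq β] (L : Prefs α β)
    (S : Finset (α × β)) (a : α) (F : Set (α × β)) : ℕ :=
  sInf {k : ℕ | ∃ l' : List β, SwapSeqL k (L.fA a) l' ∧
      ∀ b, (a, b) ∈ F → ∀ b', (a, b') ∈ S → l'.idxOf b' < l'.idxOf b}

/-- `gCost L S b F` : the minimum number of swaps within the list `ℓ(b)` after
which, for every `a` with `(a, b) ∈ F`, the vertex `a` appears below every
`S`-neighbor of `b`. -/
noncomputable def gCost {α β : Type*} [DecidableEq α] (L : Prefs α β)
    (S : Finset (α × β)) (b : β) (F : Set (α × β)) : ℕ :=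
  sInf {k : ℕ | ∃ l' : List α, SwapSeqL k (L.fB b) l' ∧
      ∀ a, (a, b) ∈ F → ∀ a', (a', b) ∈ S → l'.idxOf a' < l'.idxOf a}

/-- `hCost E cA cB L S F = Σ_{a ∈ A} f_a(F) + Σ_{b ∈ B} g_b(E_b ∖ F)`. -/
noncomputable def hCost {α β : Type*} [Fintype α] [Fintype β]
    [DecidableEq α] [DecidableEq β]
    (E : Finset (α × β)) (cA : α → ℕ) (cB : β → ℕ) (L : Prefs α β)
    (S : Finset (α × β)) (F : Set (α × β)) : ℕ :=
  (∑ a : α, fCost L S a F) +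
    (∑ b : β, gCost L S b ({e | CapBlocking E cA cB L S e} \ F))

/-! Swaps in different lists are independent, so a swap sequence amounts to one swap sequence per
list, and the lengths add up. With respect to any lists, an edge `ab ∉ S` does not block iff `a` is
full and ranks `b` below all its `S`-partners, or symmetrically at `b`. Hence a blocking edge can
only be destroyed at a full endpoint, by demoting it there below all `S`-partners; `F` is the set of
blocking edges demoted at their `A`-endpoint, which gives the lower bound `h(F)`.

Conversely, each list can be rearranged by the minimum number of swaps so that the prescribed
vertices are demoted. Among these optimal rearrangements one never promotes a vertex that already
ranked below all `S`-partners: otherwise the result has an adjacent pair in the opposite order to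
the original list, outside the demoted set, and swapping it back lowers the bubble-sort distance
to the original list, contradicting optimality. So no new blocking edge appears. -/

section Swaps

variable {γ : Type*}

theorem AdjSwap.perm {l l' : List γ} (h : AdjSwap l l') : l'.Perm l := by
  obtain ⟨p, s, x, y, rfl, rfl⟩ := h
  exact .append_left p (.swap x y s)

theorem AdjSwap.cons {l l' : List γ} (c : γ) (h : AdjSwap l l') : AdjSwap (c :: l) (c :: l') := by
  obtain ⟨p, s, x, y, rfl, rfl⟩ := h
  exact ⟨c :: p, s, x, y, rfl, rfl⟩

theorem SwapSeqL.perm : ∀ {k : ℕ} {l l' : List γ}, SwapSeqL k l l' → l'.Perm l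
  | 0, _, _, rfl => .refl _
  | _ + 1, _, _, ⟨_, h, hs⟩ => hs.perm.trans h.perm

theorem SwapSeqL.trans : ∀ {k₁ k₂ : ℕ} {l m r : List γ},
    SwapSeqL k₁ l m → SwapSeqL k₂ m r → SwapSeqL (k₁ + k₂) l r
  | 0, _, _, _, _, rfl, h => by rwa [Nat.zero_add]
  | k₁ + 1, k₂, _, _, _, ⟨l', h, hs⟩, h' => by
      rw [Nat.add_right_comm]
      exact ⟨l', h, hs.trans h'⟩

theorem SwapSeqL.snoc {k : ℕ} {l m m' : List γ} (h : SwapSeqL k l m) (h' : AdjSwap m m') :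
    SwapSeqL (k + 1) l m' :=
  h.trans ⟨m', h', rfl⟩

theorem SwapSeqL.exists_snoc : ∀ {k : ℕ} {l l' : List γ}, SwapSeqL (k + 1) l l' →
    ∃ m, SwapSeqL k l m ∧ AdjSwap m l'
  | 0, l, _, ⟨_, h, rfl⟩ => ⟨l, rfl, h⟩
  | _ + 1, _, _, ⟨l'', h, hs⟩ =>
      let ⟨m, hm, h'⟩ := hs.exists_snoc
      ⟨m, ⟨l'', h, hm⟩, h'⟩

theorem SwapSeqL.cons : ∀ {k : ℕ} {l l' : List γ} (c : γ),
    SwapSeqL k l l' → SwapSeqL k (c :: l) (c :: l')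
  | 0, _, _, _, rfl => rfl
  | _ + 1, _, _, c, ⟨l'', h, hs⟩ => ⟨c :: l'', h.cons c, hs.cons c⟩

end Swaps

namespace List

variable {γ : Type*}

theorem Nodup.ne_of_append_cons_cons {p s : List γ} {x y : γ} (h : (p ++ x :: y :: s).Nodup) :
    x ≠ y := by
  rintro rfl
  simpa using h.sublist (sublist_append_right p _)

theorem Nodup.notMem_of_append_of_mem {p s : List γ} {x : γ} (h : (p ++ s).Nodup) (hx : x ∈ s) :
    x ∉ p :=
  fun hp => disjoint_of_nodup_append h hp hx

variable [DecidableEq γ] {l : List γ}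

theorem idxOf_append_cons {p s : List γ} {x : γ} (hx : x ∉ p) :
    (p ++ x :: s).idxOf x = p.length := by
  rw [idxOf_append_of_notMem hx, idxOf_cons_self, Nat.add_zero]

theorem idxOf_append_cons_cons {p s : List γ} {x y : γ} (hy : y ∉ p) (hxy : x ≠ y) :
    (p ++ x :: y :: s).idxOf y = p.length + 1 := by
  rw [idxOf_append_of_notMem hy, idxOf_cons_ne _ hxy, idxOf_cons_self]

theorem idxOf_append_cons_cons_swap {p s : List γ} {x y z : γ} (hzx : z ≠ x) (hzy : z ≠ y) :
    (p ++ y :: x :: s).idxOf z = (p ++ x :: y :: s).idxOf z := by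
  by_cases hz : z ∈ p
  · rw [idxOf_append_of_mem hz, idxOf_append_of_mem hz]
  · simp only [idxOf_append_of_notMem hz, idxOf_cons_ne _ hzx.symm, idxOf_cons_ne _ hzy.symm]

theorem idxOf_erase_of_lt (hl : l.Nodup) {x y : γ} (h : l.idxOf y < l.idxOf x) :
    (l.erase x).idxOf y = l.idxOf y := by
  by_cases hx : x ∈ l
  · obtain ⟨p, s, rfl⟩ := append_of_mem hx
    have hxp : x ∉ p := hl.notMem_of_append_of_mem mem_cons_self
    have hyp : y ∈ p := by
      by_contra hyp
      rw [idxOf_append_of_notMem hyp, idxOf_append_cons hxp] at h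
      omega
    rw [erase_append_right _ hxp, erase_cons_head, idxOf_append_of_mem hyp,
      idxOf_append_of_mem hyp]
  · rw [erase_of_not_mem hx]

theorem idxOf_erase_of_gt (hl : l.Nodup) {x y : γ} (hx : x ∈ l) (h : l.idxOf x < l.idxOf y) :
    (l.erase x).idxOf y = l.idxOf y - 1 := by
  obtain ⟨p, s, rfl⟩ := append_of_mem hx
  have hxp : x ∉ p := hl.notMem_of_append_of_mem mem_cons_self
  rw [idxOf_append_cons hxp] at h
  have hyp : y ∉ p := by
    intro hyp
    rw [idxOf_append_of_mem hyp] at h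
    exact absurd (idxOf_lt_length_of_mem hyp) (not_lt.2 h.le)
  have hxy : x ≠ y := by rintro rfl; rw [idxOf_append_cons hxp] at h; omega
  rw [erase_append_right _ hxp, erase_cons_head, idxOf_append_of_notMem hyp,
    idxOf_append_of_notMem hyp, idxOf_cons_ne _ hxy]
  omega

theorem idxOf_erase_lt_idxOf_erase (hl : l.Nodup) {c w x : γ} (hwc : w ≠ c) (hxc : x ≠ c)
    (h : l.idxOf w < l.idxOf x) : (l.erase c).idxOf w < (l.erase c).idxOf x := by
  by_cases hc : c ∈ l
  · have hcw : l.idxOf c ≠ l.idxOf w := fun e => hwc ((idxOf_inj hc).1 e).symm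
    have hcx : l.idxOf c ≠ l.idxOf x := fun e => hxc ((idxOf_inj hc).1 e).symm
    rcases lt_or_gt_of_ne hcw with hcw | hcw
    · rw [idxOf_erase_of_gt hl hc hcw, idxOf_erase_of_gt hl hc (hcw.trans h)]
      omega
    · rcases lt_or_gt_of_ne hcx with hcx | hcx
      · rw [idxOf_erase_of_lt hl hcw, idxOf_erase_of_gt hl hc hcx]
        omega
      · rwa [idxOf_erase_of_lt hl hcw, idxOf_erase_of_lt hl hcx]
  · rwa [erase_of_not_mem hc]

end List

/-- Bubble-sort distance: bring the head `a` of `m` to the front of `l` by `l.idxOf a` swaps,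
then recurse. For a permutation `m` of a duplicate-free `l` it counts the inversions. -/
def swapDist {γ : Type*} [DecidableEq γ] : List γ → List γ → ℕ
  | _, [] => 0
  | l, a :: t => l.idxOf a + swapDist (l.erase a) t

section SwapDist

variable {γ : Type*} [DecidableEq γ]

theorem swapDist_cons (l : List γ) (a : γ) (t : List γ) :
    swapDist l (a :: t) = l.idxOf a + swapDist (l.erase a) t := rfl

theorem swapDist_self : ∀ l : List γ, swapDist l l = 0
  | [] => rfl
  | a :: t => by rw [swapDist_cons, List.idxOf_cons_self, List.erase_cons_head, swapDist_self t]

theorem swapSeqL_idxOf_cons_erase : ∀ {l : List γ} {a : γ}, a ∈ l →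
    SwapSeqL (l.idxOf a) l (a :: l.erase a)
  | c :: r, a, h => by
      by_cases hca : c = a
      · subst hca
        rw [List.idxOf_cons_self, List.erase_cons_head]
        rfl
      · have har : a ∈ r := (List.mem_cons.1 h).resolve_left (Ne.symm hca)
        rw [List.idxOf_cons_ne _ hca, List.erase_cons_tail (by simpa using hca)]
        exact ((swapSeqL_idxOf_cons_erase har).cons c).snoc ⟨[], r.erase a, c, a, rfl, rfl⟩

theorem swapSeqL_swapDist : ∀ {m l : List γ}, m.Perm l → SwapSeqL (swapDist l m) l m
  | [], _, h => by rw [h.symm.eq_nil]; rfl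
  | a :: t, l, h => by
      have ha : a ∈ l := h.subset List.mem_cons_self
      have ht : t.Perm (l.erase a) := (h.trans (List.perm_cons_erase ha)).cons_inv
      exact (swapSeqL_idxOf_cons_erase ha).trans ((swapSeqL_swapDist ht).cons a)

theorem swapDist_swap : ∀ {p l s : List γ} {x w : γ}, l.Nodup →
    (p ++ x :: w :: s).Perm l → l.idxOf w < l.idxOf x →
    swapDist l (p ++ w :: x :: s) + 1 = swapDist l (p ++ x :: w :: s)
  | [], l, s, x, w, hl, hperm, hlt => by
      simp only [List.nil_append, swapDist_cons]
      rw [List.idxOf_erase_of_gt hl (hperm.subset (by simp)) hlt, List.idxOf_erase_of_lt hl hlt,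
        List.erase_comm]
      omega
  | c :: p, l, s, x, w, hl, hperm, hlt => by
      have hc : c ∈ l := hperm.subset List.mem_cons_self
      have hrest : (p ++ x :: w :: s).Perm (l.erase c) :=
        (hperm.trans (List.perm_cons_erase hc)).cons_inv
      have hcnot : c ∉ p ++ x :: w :: s := (List.nodup_cons.1 (hperm.nodup_iff.2 hl)).1
      have hlt' : (l.erase c).idxOf w < (l.erase c).idxOf x :=
        List.idxOf_erase_lt_idxOf_erase hl (by rintro rfl; simp at hcnot)
          (by rintro rfl; simp at hcnot) hlt
      have := swapDist_swap (hl.erase c) hrest hlt'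
      simp only [List.cons_append, swapDist_cons]
      omega

theorem swapDist_le_of_adjSwap {l m m' : List γ} (hl : l.Nodup) (hm : m.Perm l)
    (h : AdjSwap m m') : swapDist l m' ≤ swapDist l m + 1 := by
  obtain ⟨p, s, x, y, rfl, rfl⟩ := h
  have hxy : x ≠ y := (hm.nodup_iff.2 hl).ne_of_append_cons_cons
  have hne : l.idxOf x ≠ l.idxOf y := fun e => hxy ((List.idxOf_inj (hm.subset (by simp))).1 e)
  rcases lt_or_gt_of_ne hne with hlt | hlt
  · have := swapDist_swap hl ((AdjSwap.perm ⟨p, s, x, y, rfl, rfl⟩).trans hm) hlt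
    omega
  · have := swapDist_swap hl hm hlt
    omega

theorem swapDist_le : ∀ {k : ℕ} {l m : List γ}, l.Nodup → SwapSeqL k l m → swapDist l m ≤ k
  | 0, l, _, _, rfl => (swapDist_self l).le
  | _ + 1, _, _, hl, h => by
      obtain ⟨m', hm', h'⟩ := h.exists_snoc
      have := swapDist_le_of_adjSwap hl hm'.perm h'
      have := swapDist_le hl hm'
      omega

end SwapDist

def RankedBelow {γ : Type*} [DecidableEq γ] (m : List γ) (F T : Set γ) : Prop :=
  ∀ f ∈ F, ∀ t ∈ T, m.idxOf t < m.idxOf f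

section RankedBelow

variable {γ : Type*} [DecidableEq γ] {l m : List γ} {F T : Set γ}

theorem RankedBelow.mono {F' : Set γ} (h : RankedBelow m F T) (hF : F' ⊆ F) :
    RankedBelow m F' T :=
  fun f hf => h f (hF hf)

theorem RankedBelow.swap {p s : List γ} {u v : γ} (hnd : (p ++ u :: v :: s).Nodup)
    (h : RankedBelow (p ++ u :: v :: s) F T) (hu : u ∉ F) (hv : v ∉ F) :
    RankedBelow (p ++ v :: u :: s) F T := by
  intro f hf t ht
  have hfu : f ≠ u := by rintro rfl; exact hu hf
  have hfv : f ≠ v := by rintro rfl; exact hv hf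
  have hup : u ∉ p := hnd.notMem_of_append_of_mem (by simp)
  have hvp : v ∉ p := hnd.notMem_of_append_of_mem (by simp)
  have huv := hnd.ne_of_append_cons_cons
  have hft := h f hf t ht
  rw [List.idxOf_append_cons_cons_swap hfu hfv]
  by_cases htu : t = u
  · subst htu
    have hne : (p ++ t :: v :: s).idxOf f ≠ (p ++ t :: v :: s).idxOf v :=
      fun e => hfv ((List.idxOf_inj (by simp)).1 e.symm).symm
    rw [List.idxOf_append_cons_cons hup huv.symm]
    rw [List.idxOf_append_cons hup] at hft
    rw [List.idxOf_append_cons_cons hvp huv] at hne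
    omega
  by_cases htv : t = v
  · subst htv
    rw [List.idxOf_append_cons hvp]
    rw [List.idxOf_append_cons_cons hvp huv] at hft
    omega
  · rwa [List.idxOf_append_cons_cons_swap htu htv]

theorem exists_swapSeqL_rankedBelow (hT : ∀ t ∈ T, t ∈ l) (hFT : Disjoint F T) :
    ∃ k m, SwapSeqL k l m ∧ RankedBelow m F T := by
  classical
  refine ⟨_, _, swapSeqL_swapDist (List.filter_append_perm (· ∈ T) l), ?_⟩
  intro f hf t ht
  have htf : t ∈ l.filter (· ∈ T) := List.mem_filter.2 ⟨hT t ht, by simpa using ht⟩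
  have hff : f ∉ l.filter (· ∈ T) :=
    fun h => hFT.notMem_of_mem_left hf (by simpa using (List.mem_filter.1 h).2)
  rw [List.idxOf_append_of_mem htf, List.idxOf_append_of_notMem hff]
  exact (List.idxOf_lt_length_of_mem htf).trans_le (Nat.le_add_right _ _)

theorem exists_adjacent_inversion (hl : l.Nodup) (hm : m.Perm l) (hT : ∀ t ∈ T, t ∈ l)
    (hmF : RankedBelow m F T) {x : γ} (hlx : RankedBelow l {x} T) (hmx : ¬RankedBelow m {x} T) :
    ∃ p u v s, m = p ++ u :: v :: s ∧ u ∉ F ∧ v ∉ F ∧ l.idxOf v < l.idxOf u := by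
  simp only [RankedBelow, Set.mem_singleton_iff, forall_eq, not_forall, not_lt] at hmx hlx
  obtain ⟨t, ht, hxt⟩ := hmx
  have hmnd : m.Nodup := hm.nodup_iff.2 hl
  obtain ⟨q, r, rfl⟩ := List.append_of_mem (hm.mem_iff.2 (hT t ht))
  have hidx_t := List.idxOf_append_cons (s := r) (hmnd.notMem_of_append_of_mem List.mem_cons_self)
  have hxq : x ∈ q := by
    by_contra hxq
    have hxt' : x ≠ t := by rintro rfl; exact lt_irrefl _ (hlx x ht)
    rw [hidx_t, List.idxOf_append_of_notMem hxq, List.idxOf_cons_ne _ hxt'.symm] at hxt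
    omega
  -- the prefix of `m` up to `t` avoids `F`, and it is not ordered as in `l` since `x` precedes `t`
  have hpre : ∀ z ∈ q ++ [t], z ∉ F := by
    intro z hz hzF
    have := hmF z hzF t ht
    rcases List.mem_append.1 hz with hz | hz
    · rw [hidx_t, List.idxOf_append_of_mem hz] at this
      exact absurd (List.idxOf_lt_length_of_mem hz) (not_lt.2 this.le)
    · rw [List.mem_singleton.1 hz] at this
      exact lt_irrefl _ this
  have hnot : ¬(q ++ [t]).IsChain (fun a b => l.idxOf a < l.idxOf b) := by
    rw [List.isChain_iff_pairwise, List.pairwise_append]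
    exact fun h => absurd (h.2.2 x hxq t (List.mem_singleton_self t)) (not_lt.2 (hlx t ht).le)
  simp only [List.isChain_iff_forall_rel_of_append_cons_cons, not_forall, not_lt] at hnot
  obtain ⟨u, v, p, s, hsplit, hvu⟩ := hnot
  have hm' : q ++ t :: r = p ++ u :: v :: (s ++ r) := by
    simpa using congrArg (· ++ r) hsplit
  refine ⟨p, u, v, s ++ r, hm', hpre u (by simp [hsplit]), hpre v (by simp [hsplit]), ?_⟩
  have huv : u ≠ v := (hm' ▸ hmnd).ne_of_append_cons_cons
  have hu : u ∈ l := hm.subset (by simp [hm'])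
  exact lt_of_le_of_ne hvu fun e => huv ((List.idxOf_inj hu).1 e.symm)

theorem exists_swapSeqL_sInf_rankedBelow (hl : l.Nodup) (hT : ∀ t ∈ T, t ∈ l)
    (hFT : Disjoint F T) :
    ∃ m, SwapSeqL (sInf {k | ∃ m, SwapSeqL k l m ∧ RankedBelow m F T}) l m ∧
      RankedBelow m F T ∧ ∀ x ∉ F, RankedBelow l {x} T → RankedBelow m {x} T := by
  obtain ⟨m, hseq, hmF⟩ := Nat.sInf_mem (s := {k | ∃ m, SwapSeqL k l m ∧ RankedBelow m F T})
    (exists_swapSeqL_rankedBelow hT hFT)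
  refine ⟨m, hseq, hmF, fun x _ hlx => ?_⟩
  by_contra hmx
  have hm := hseq.perm
  obtain ⟨p, u, v, s, rfl, hu, hv, hvu⟩ := exists_adjacent_inversion hl hm hT hmF hlx hmx
  -- swapping the inverted pair back keeps `F` below `T` and saves a swap
  have hm' : (p ++ v :: u :: s).Perm l := (AdjSwap.perm ⟨p, s, u, v, rfl, rfl⟩).trans hm
  have hmin : sInf {k | ∃ m, SwapSeqL k l m ∧ RankedBelow m F T} ≤ swapDist l (p ++ v :: u :: s) :=
    Nat.sInf_le ⟨_, swapSeqL_swapDist hm', hmF.swap (hm.nodup_iff.2 hl) hu hv⟩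
  have := swapDist_swap hl hm hvu
  have := swapDist_le hl hseq
  omega

theorem not_exists_prefersIn_iff {x : γ} (hx : x ∈ l) (hT : ∀ t ∈ T, t ∈ l) (hxT : x ∉ T) :
    (¬∃ t ∈ T, PrefersIn l x t) ↔ RankedBelow l {x} T := by
  simp only [RankedBelow, PrefersIn, hx, true_and, not_exists, not_and, not_lt,
    Set.mem_singleton_iff, forall_eq]
  refine forall₂_congr fun t ht => ⟨fun h => lt_of_le_of_ne h fun e => ?_, le_of_lt⟩
  exact hxT ((List.idxOf_inj (hT t ht)).1 e ▸ ht)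

end RankedBelow

def Prefs.flip {α β : Type*} (P : Prefs α β) : Prefs β α := ⟨P.fB, P.fA⟩

section Prefs

variable {α β : Type*}

theorem SwapSeq.flip : ∀ {k : ℕ} {P Q : Prefs α β}, SwapSeq k P Q → SwapSeq k P.flip Q.flip
  | 0, _, _, rfl => rfl
  | _ + 1, _, _, ⟨R, h, hs⟩ => ⟨R.flip, h.symm, hs.flip⟩

theorem SwapSeq.trans : ∀ {k₁ k₂ : ℕ} {P Q R : Prefs α β},
    SwapSeq k₁ P Q → SwapSeq k₂ Q R → SwapSeq (k₁ + k₂) P R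
  | 0, _, _, _, _, rfl, h => by rwa [Nat.zero_add]
  | k₁ + 1, k₂, _, _, _, ⟨P', h, hs⟩, h' => by
      rw [Nat.add_right_comm]
      exact ⟨P', h, hs.trans h'⟩

theorem SwapStep.perm_fA {L L' : Prefs α β} (h : SwapStep L L') (a : α) :
    (L'.fA a).Perm (L.fA a) := by
  rcases h with ⟨a₀, hadj, hne, -⟩ | ⟨-, -, -, hfA⟩
  · by_cases ha : a = a₀
    · exact ha ▸ hadj.perm
    · rw [hne a ha]
  · rw [hfA a]

theorem SwapSeq.perm_fA : ∀ {k : ℕ} {L L' : Prefs α β}, SwapSeq k L L' →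
    ∀ a, (L'.fA a).Perm (L.fA a)
  | 0, _, _, rfl, _ => .refl _
  | _ + 1, _, _, ⟨_, h, hs⟩, a => (hs.perm_fA a).trans (h.perm_fA a)

theorem SwapSeq.perm_fB {k : ℕ} {L L' : Prefs α β} (h : SwapSeq k L L') (b : β) :
    (L'.fB b).Perm (L.fB b) :=
  h.flip.perm_fA b

theorem ValidPrefs.of_swapSeq {E : Finset (α × β)} {L L' : Prefs α β} {k : ℕ}
    (hL : ValidPrefs E L) (h : SwapSeq k L L') : ValidPrefs E L' := by
  obtain ⟨hndA, hndB, hmemA, hmemB⟩ := hL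
  exact ⟨fun a => (h.perm_fA a).nodup_iff.2 (hndA a), fun b => (h.perm_fB b).nodup_iff.2 (hndB b),
    fun a b => (h.perm_fA a).mem_iff.trans (hmemA a b),
    fun a b => (h.perm_fB b).mem_iff.trans (hmemB a b)⟩

theorem SwapSeq.update_fA [DecidableEq α] : ∀ {k : ℕ} (P : Prefs α β) (a : α) (m : List β),
    SwapSeqL k (P.fA a) m → SwapSeq k P ⟨Function.update P.fA a m, P.fB⟩
  | 0, P, a, _, rfl => by rw [Function.update_eq_self]; rfl
  | _ + 1, P, a, m, ⟨m', h, hs⟩ => by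
      refine ⟨⟨Function.update P.fA a m', P.fB⟩,
        Or.inl ⟨a, by simpa using h, fun a' ha' => Function.update_of_ne ha' _ _, fun _ => rfl⟩, ?_⟩
      simpa using SwapSeq.update_fA ⟨Function.update P.fA a m', P.fB⟩ a m (by simpa using hs)

theorem swapSeq_sum_of_swapSeqL_fA [DecidableEq α] (n : α → ℕ) (g : α → List β) (s : Finset α) :
    ∀ P : Prefs α β, (∀ a ∈ s, SwapSeqL (n a) (P.fA a) (g a)) → (∀ a ∉ s, g a = P.fA a) →
      SwapSeq (∑ a ∈ s, n a) P ⟨g, P.fB⟩ := by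
  induction s using Finset.induction_on with
  | empty =>
    intro P _ hg
    have : g = P.fA := funext fun a => hg a (Finset.notMem_empty a)
    subst this
    rfl
  | insert a s ha ih =>
    intro P hs hg
    rw [Finset.sum_insert ha]
    refine (SwapSeq.update_fA P a (g a) (hs a (Finset.mem_insert_self a s))).trans
      (ih _ (fun a' ha' => ?_) (fun a' ha' => ?_))
    · have : a' ≠ a := fun e => ha (e ▸ ha')
      simpa [Function.update_of_ne this] using hs a' (Finset.mem_insert_of_mem ha')
    · by_cases e : a' = a
      · subst e; simp
      · simpa [Function.update_of_ne e] using hg a' (by simp [e, ha'])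

theorem swapSeqL_add_single {ι γ : Type*} [DecidableEq ι] {u v w : ι → List γ} {n : ι → ℕ}
    (i : ι) (hi : AdjSwap (u i) (v i)) (hne : ∀ j, j ≠ i → v j = u j)
    (h : ∀ j, SwapSeqL (n j) (v j) (w j)) :
    ∀ j, SwapSeqL ((n + Pi.single i 1 : ι → ℕ) j) (u j) (w j) := by
  intro j
  by_cases hj : j = i
  · subst hj
    rw [Pi.add_apply, Pi.single_eq_same]
    exact ⟨v j, hi, h j⟩
  · simpa [hj, hne j hj] using h j

variable [Fintype α] [Fintype β] [DecidableEq α] [DecidableEq β]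

theorem swapSeq_iff {k : ℕ} {L L' : Prefs α β} :
    SwapSeq k L L' ↔ ∃ (kA : α → ℕ) (kB : β → ℕ), ∑ a, kA a + ∑ b, kB b = k ∧
      (∀ a, SwapSeqL (kA a) (L.fA a) (L'.fA a)) ∧ (∀ b, SwapSeqL (kB b) (L.fB b) (L'.fB b)) := by
  constructor
  · induction k generalizing L with
    | zero =>
      rintro rfl
      exact ⟨0, 0, by simp, fun _ => rfl, fun _ => rfl⟩
    | succ k ih =>
      rintro ⟨M, hstep, hs⟩
      obtain ⟨kA, kB, hsum, hA, hB⟩ := ih hs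
      rcases hstep with ⟨a, hadj, hne, hfB⟩ | ⟨b, hadj, hne, hfA⟩
      · refine ⟨kA + Pi.single a 1, kB, ?_, swapSeqL_add_single a hadj hne hA,
          fun b => hfB b ▸ hB b⟩
        simp [Finset.sum_add_distrib, ← hsum]
        omega
      · refine ⟨kA, kB + Pi.single b 1, ?_, fun a => hfA a ▸ hA a,
          swapSeqL_add_single b hadj hne hB⟩
        simp [Finset.sum_add_distrib, ← hsum]
        omega
  · rintro ⟨kA, kB, rfl, hA, hB⟩
    exact (swapSeq_sum_of_swapSeqL_fA kA L'.fA _ L (fun a _ => hA a) (by simp)).trans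
      (swapSeq_sum_of_swapSeqL_fA kB L'.fB _ ⟨L.fB, L'.fA⟩ (fun b _ => hB b) (by simp)).flip

end Prefs

section Stability

variable {α β : Type*} [DecidableEq α] [DecidableEq β]

def blockingEdges (E : Finset (α × β)) (cA : α → ℕ) (cB : β → ℕ) (L : Prefs α β)
    (S : Finset (α × β)) : Set (α × β) :=
  {e | CapBlocking E cA cB L S e}

def RejectedByA (cA : α → ℕ) (L : Prefs α β) (S : Finset (α × β)) (e : α × β) : Prop :=
  degA S e.1 = cA e.1 ∧ RankedBelow (L.fA e.1) {e.2} {b | (e.1, b) ∈ S}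

def RejectedByB (cB : β → ℕ) (L : Prefs α β) (S : Finset (α × β)) (e : α × β) : Prop :=
  degB S e.2 = cB e.2 ∧ RankedBelow (L.fB e.2) {e.1} {a | (a, e.2) ∈ S}

variable {E S : Finset (α × β)} {cA : α → ℕ} {cB : β → ℕ} {L : Prefs α β}

theorem not_capBlocking_iff (hL : ValidPrefs E L) (hSE : S ⊆ E)
    (hdA : ∀ a, degA S a ≤ cA a) (hdB : ∀ b, degB S b ≤ cB b) {e : α × β} (he : e ∈ E)
    (heS : e ∉ S) :
    ¬CapBlocking E cA cB L S e ↔ RejectedByA cA L S e ∨ RejectedByB cB L S e := by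
  obtain ⟨-, -, hmemA, hmemB⟩ := hL
  simp only [CapBlocking, he, heS, not_false_eq_true, true_and, not_and_or, not_or]
  exact or_congr
    (and_congr (by have := hdA e.1; omega)
      (not_exists_prefersIn_iff ((hmemA _ _).2 he) (fun b hb => (hmemA _ _).2 (hSE hb)) heS))
    (and_congr (by have := hdB e.2; omega)
      (not_exists_prefersIn_iff ((hmemB _ _).2 he) (fun a ha => (hmemB _ _).2 (hSE ha)) heS))

variable [Fintype α] [Fintype β]

theorem exists_hCost_le_of_capStable (hL : ValidPrefs E L) (hSE : S ⊆ E)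
    (hdA : ∀ a, degA S a ≤ cA a) (hdB : ∀ b, degB S b ≤ cB b) {k : ℕ} {L' : Prefs α β}
    (hseq : SwapSeq k L L') (hst : CapStable E cA cB L' S) :
    blockingEdges E cA cB L S ⊆ {e ∈ blockingEdges E cA cB L S | degA S e.1 = cA e.1} ∪
        {e ∈ blockingEdges E cA cB L S | degB S e.2 = cB e.2} ∧
      ∃ F : Set (α × β),
        blockingEdges E cA cB L S \ {e ∈ blockingEdges E cA cB L S | degB S e.2 = cB e.2} ⊆ F ∧
        F ⊆ {e ∈ blockingEdges E cA cB L S | degA S e.1 = cA e.1} ∧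
        hCost E cA cB L S F ≤ k := by
  obtain ⟨kA, kB, rfl, hA, hB⟩ := swapSeq_iff.1 hseq
  have hrej : ∀ e ∈ blockingEdges E cA cB L S, RejectedByA cA L' S e ∨ RejectedByB cB L' S e :=
    fun e he => (not_capBlocking_iff (hL.of_swapSeq hseq) hSE hdA hdB he.1 he.2.1).1 (hst e)
  refine ⟨fun e he => (hrej e he).imp (fun h => ⟨he, h.1⟩) (fun h => ⟨he, h.1⟩),
    {e ∈ blockingEdges E cA cB L S | RejectedByA cA L' S e}, fun e ⟨he, heB⟩ => ?_,
    fun e he => ⟨he.1, he.2.1⟩, add_le_add (Finset.sum_le_sum fun a _ => ?_)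
      (Finset.sum_le_sum fun b _ => ?_)⟩
  · exact ⟨he, (hrej e he).resolve_right fun h => heB ⟨he, h.1⟩⟩
  · exact Nat.sInf_le ⟨L'.fA a, hA a, fun b hb b' hb' => hb.2.2 b rfl b' hb'⟩
  · refine Nat.sInf_le ⟨L'.fB b, hB b, fun a ⟨hab, habF⟩ a' ha' => ?_⟩
    exact ((hrej _ hab).resolve_left fun h => habF ⟨hab, h⟩).2 a rfl a' ha'

theorem exists_capStable_of_subset (hL : ValidPrefs E L) (hSE : S ⊆ E)
    (hdA : ∀ a, degA S a ≤ cA a) (hdB : ∀ b, degB S b ≤ cB b) {F : Set (α × β)}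
    (hF₁ : blockingEdges E cA cB L S \
      {e ∈ blockingEdges E cA cB L S | degB S e.2 = cB e.2} ⊆ F)
    (hF₂ : F ⊆ {e ∈ blockingEdges E cA cB L S | degA S e.1 = cA e.1}) :
    ∃ L', SwapSeq (hCost E cA cB L S F) L L' ∧ CapStable E cA cB L' S := by
  have hFS : ∀ e ∈ F, e ∉ S := fun e he => (hF₂ he).1.2.1
  have ⟨hndA, hndB, hmemA, hmemB⟩ := hL
  choose gA hgA using fun a => exists_swapSeqL_sInf_rankedBelow (hndA a)
    (fun b hb => (hmemA a b).2 (hSE hb)) (Set.disjoint_left.2 fun b hb => hFS (a, b) hb)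
  choose gB hgB using fun b => exists_swapSeqL_sInf_rankedBelow (hndB b)
    (fun a ha => (hmemB a b).2 (hSE ha))
    (Set.disjoint_left.2 fun a (ha : (a, b) ∈ blockingEdges E cA cB L S \ F) => ha.1.2.1)
  have hseq : SwapSeq (hCost E cA cB L S F) L ⟨gA, gB⟩ :=
    swapSeq_iff.2 ⟨_, _, rfl, fun a => (hgA a).1, fun b => (hgB b).1⟩
  refine ⟨⟨gA, gB⟩, hseq, fun ⟨a, b⟩ hblk => ?_⟩
  refine (not_capBlocking_iff (hL.of_swapSeq hseq) hSE hdA hdB hblk.1 hblk.2.1).2 ?_ hblk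
  by_cases heb : (a, b) ∈ blockingEdges E cA cB L S
  · by_cases heF : (a, b) ∈ F
    · exact .inl ⟨(hF₂ heF).2, (hgA a).2.1.mono (Set.singleton_subset_iff.2 heF)⟩
    · have heB : degB S b = cB b := by_contra fun h => heF (hF₁ ⟨heb, fun h' => h h'.2⟩)
      exact .inr ⟨heB, (hgB b).2.1.mono (Set.singleton_subset_iff.2 ⟨heb, heF⟩)⟩
  · rcases (not_capBlocking_iff hL hSE hdA hdB hblk.1 hblk.2.1).1 heb with h | h
    · exact .inl ⟨h.1, (hgA a).2.2 b (fun hF => heb (hF₂ hF).1) h.2⟩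
    · exact .inr ⟨h.1, (hgB b).2.2 a (fun hF => heb hF.1) h.2⟩

end Stability

theorem isLeast_sInf_of_forall_mem {K M : Set ℕ} (hne : M.Nonempty) (hmem : ∀ m ∈ M, m ∈ K)
    (hle : ∀ k ∈ K, ∃ m ∈ M, m ≤ k) : IsLeast K (sInf M) :=
  ⟨hmem _ (Nat.sInf_mem hne), fun k hk =>
    let ⟨_, hm, hmk⟩ := hle k hk
    (Nat.sInf_le hm).trans hmk⟩

theorem capacitated_min_swaps_general {α β : Type*} [Fintype α] [Fintype β]
    [DecidableEq α] [DecidableEq β]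
    (E : Finset (α × β)) (cA : α → ℕ) (cB : β → ℕ)
    (L : Prefs α β) (hL : ValidPrefs E L)
    (S : Finset (α × β)) (hSE : S ⊆ E)
    (hdA : ∀ a, degA S a ≤ cA a) (hdB : ∀ b, degB S b ≤ cB b) :
    ((∃ (k : ℕ) (L' : Prefs α β), SwapSeq k L L' ∧ CapStable E cA cB L' S) ↔
        {e : α × β | CapBlocking E cA cB L S e} =
          {e : α × β | CapBlocking E cA cB L S e ∧ degA S e.1 = cA e.1} ∪
            {e : α × β | CapBlocking E cA cB L S e ∧ degB S e.2 = cB e.2}) ∧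
    ({e : α × β | CapBlocking E cA cB L S e} =
          {e : α × β | CapBlocking E cA cB L S e ∧ degA S e.1 = cA e.1} ∪
            {e : α × β | CapBlocking E cA cB L S e ∧ degB S e.2 = cB e.2} →
      IsLeast {k : ℕ | ∃ L' : Prefs α β, SwapSeq k L L' ∧ CapStable E cA cB L' S}
        (sInf {m : ℕ | ∃ F : Set (α × β),
          {e : α × β | CapBlocking E cA cB L S e} \
              {e : α × β | CapBlocking E cA cB L S e ∧ degB S e.2 = cB e.2} ⊆ F ∧
          F ⊆ {e : α × β | CapBlocking E cA cB L S e ∧ degA S e.1 = cA e.1} ∧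
          hCost E cA cB L S F = m})) := by
  refine ⟨⟨fun ⟨k, L', hseq, hst⟩ => ?_, fun hEq => ?_⟩, fun hEq =>
    isLeast_sInf_of_forall_mem
      ⟨_, _, Set.sdiff_subset_iff.2 (hEq.trans (Set.union_comm _ _)).subset, subset_rfl, rfl⟩ ?_ ?_⟩
  · exact (exists_hCost_le_of_capStable hL hSE hdA hdB hseq hst).1.antisymm
      (Set.union_subset (fun _ h => h.1) (fun _ h => h.1))
  · obtain ⟨L', hL'⟩ := exists_capStable_of_subset hL hSE hdA hdB
      (Set.sdiff_subset_iff.2 (hEq.trans (Set.union_comm _ _)).subset) subset_rfl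
    exact ⟨_, L', hL'⟩
  · rintro _ ⟨F, hF₁, hF₂, rfl⟩
    exact exists_capStable_of_subset hL hSE hdA hdB hF₁ hF₂
  · rintro k ⟨L', hseq, hst⟩
    obtain ⟨-, F, hF₁, hF₂, hle⟩ := exists_hCost_le_of_capStable hL hSE hdA hdB hseq hst
    exact ⟨_, ⟨F, hF₁, hF₂, rfl⟩, hle⟩

/-- with `E_b` the set of blocking edges of `S`, `E_b^A` (resp.
`E_b^B`) those blocking edges whose endpoint in `A` (resp. `B`) has full
capacity: (i) `S` can be made stable by a finite sequence of swaps iff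
`E_b = E_b^A ∪ E_b^B`; and (ii) in that case the minimum length of such a
sequence is `min { h(F) : E_b ∖ E_b^B ⊆ F ⊆ E_b^A }`. -/
theorem capacitated_min_swaps {α β : Type*} [Fintype α] [Fintype β]
    [DecidableEq α] [DecidableEq β]
    (E : Finset (α × β)) (cA : α → ℕ) (cB : β → ℕ)
    (hcA : ∀ a, 0 < cA a) (hcB : ∀ b, 0 < cB b)
    (L : Prefs α β) (hL : ValidPrefs E L)
    (S : Finset (α × β)) (hSE : S ⊆ E)
    (hdA : ∀ a, degA S a ≤ cA a) (hdB : ∀ b, degB S b ≤ cB b) :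
    ((∃ (k : ℕ) (L' : Prefs α β), SwapSeq k L L' ∧ CapStable E cA cB L' S) ↔
        {e : α × β | CapBlocking E cA cB L S e} =
          {e : α × β | CapBlocking E cA cB L S e ∧ degA S e.1 = cA e.1} ∪
            {e : α × β | CapBlocking E cA cB L S e ∧ degB S e.2 = cB e.2}) ∧
    ({e : α × β | CapBlocking E cA cB L S e} =
          {e : α × β | CapBlocking E cA cB L S e ∧ degA S e.1 = cA e.1} ∪
            {e : α × β | CapBlocking E cA cB L S e ∧ degB S e.2 = cB e.2} →
      IsLeast {k : ℕ | ∃ L' : Prefs α β, SwapSeq k L L' ∧ CapStable E cA cB L' S}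
        (sInf {m : ℕ | ∃ F : Set (α × β),
          {e : α × β | CapBlocking E cA cB L S e} \
              {e : α × β | CapBlocking E cA cB L S e ∧ degB S e.2 = cB e.2} ⊆ F ∧
          F ⊆ {e : α × β | CapBlocking E cA cB L S e ∧ degA S e.1 = cA e.1} ∧
          hCost E cA cB L S F = m})) :=
  capacitated_min_swaps_general E cA cB L hL S hSE hdA hdB
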